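/- If there exists a walk scheme for an instance (G, λ, s, t) of Dyck-2 reachability, then the instance is a yes-instance, i.e., there exists a valid walk from s to t. -/
import Mathlib


/-- The four-letter alphabet of Dyck-2: two kinds of opening and closing brackets. -/
inductive Sig2 : Type
  | o1 | c1 | o2 | c2
deriving DecidableEq

/-- The Dyck-2 language: the smallest language containing ε and closed under
concatenation and wrapping in either kind of matching brackets. -/
inductive IsDyck : List Sig2 → Prop
  | nil : IsDyck []
  | append {u v : List Sig2} : IsDyck u → IsDyck v → IsDyck (u ++ v)
  | br1 {u : List Sig2} : IsDyck u → IsDyck (Sig2.o1 :: u ++ [Sig2.c1])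
  | br2 {u : List Sig2} : IsDyck u → IsDyck (Sig2.o2 :: u ++ [Sig2.c2])

/-- `IsWalk E u v p` : `p` is a walk from `u` to `v` in the graph with edge set `E`. -/
def IsWalk {V : Type} (E : Set (V × V)) : V → V → List (V × V) → Prop
  | u, v, [] => u = v
  | u, v, e :: p => e ∈ E ∧ e.1 = u ∧ IsWalk E e.2 v p

/-- A walk is valid if its labels form a Dyck-2 word. -/
def IsValidWalk {V : Type} (E : Set (V × V)) (lab : V × V → Sig2) (u v : V)
    (p : List (V × V)) : Prop :=
  IsWalk E u v p ∧ IsDyck (p.map lab)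

/-- Right-hand sides of productions of a walk scheme (for a nonterminal `⟨u,v⟩`):
`split w` is `⟨u,v⟩ → ⟨u,w⟩⟨w,v⟩`, `wrap x y` is `⟨u,v⟩ → (u,x) ⟨x,y⟩ (y,v)`,
and `eps` is `⟨u,u⟩ → ε`. -/
inductive WSRhs (V : Type) : Type
  | split (w : V)
  | wrap (x y : V)
  | eps

/-- The edge relation of the dependency graph on nonterminals:
`q` occurs on the right-hand side of the (unique) production of `p ∈ N`. -/
def WSChild {V : Type} (N : Set (V × V)) (prod : V × V → WSRhs V)
    (p q : V × V) : Prop :=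
  p ∈ N ∧ match prod p with
    | .split w => q = (p.1, w) ∨ q = (w, p.2)
    | .wrap x y => q = (x, y)
    | .eps => False

/-- A walk scheme for an instance `(G, lab, s, t)` of Dyck-2 reachability:
a context-free grammar with terminal symbols the edges, nonterminals `N ⊆ V × V`,
axiom `⟨s,t⟩`, exactly one production per nonterminal of one of the three allowed
forms, whose dependency graph on nonterminals is acyclic. -/
structure WalkScheme {V : Type} (E : Set (V × V)) (lab : V × V → Sig2) (s t : V) where
  N : Set (V × V)
  prod : V × V → WSRhs V
  axiom_mem : (s, t) ∈ N
  prod_valid : ∀ u v : V, (u, v) ∈ N →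
    match prod (u, v) with
    | .split w => (u, w) ∈ N ∧ (w, v) ∈ N
    | .wrap x y => (u, x) ∈ E ∧ (y, v) ∈ E ∧ (x, y) ∈ N ∧
        ((lab (u, x) = Sig2.o1 ∧ lab (y, v) = Sig2.c1) ∨
         (lab (u, x) = Sig2.o2 ∧ lab (y, v) = Sig2.c2))
    | .eps => u = v
  acyclic : ∀ p : V × V, ¬ Relation.TransGen (WSChild N prod) p p

lemma isWalk_append {V : Type} (E : Set (V × V)) {u w v : V} {p q : List (V × V)}
    (hp : IsWalk E u w p) (hq : IsWalk E w v q) : IsWalk E u v (p ++ q) := by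
  induction p generalizing u with
  | nil => simpa [IsWalk] using hp ▸ hq
  | cons e p ih =>
    obtain ⟨hE, h1, h2⟩ := hp
    exact ⟨hE, h1, ih h2⟩

/-- If there exists a walk scheme for an instance `(G, lab, s, t)` of Dyck-2
reachability, then the instance is a yes-instance: there is a valid walk from
`s` to `t`. -/
theorem walkScheme_implies_yes
    {V : Type} [Fintype V] (E : Set (V × V)) (lab : V × V → Sig2) (s t : V)
    (W : WalkScheme E lab s t) :
    ∃ p : List (V × V), IsValidWalk E lab s t p := by
  have hwf : WellFounded (Function.swap (WSChild W.N W.prod)) := by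
    have h1 : IsTrans (V × V) (Relation.TransGen (Function.swap (WSChild W.N W.prod))) :=
      ⟨fun _ _ _ => Relation.TransGen.trans⟩
    have h2 : IsIrrefl (V × V) (Relation.TransGen (Function.swap (WSChild W.N W.prod))) :=
      ⟨fun p h => W.acyclic p (Relation.transGen_swap.mp h)⟩
    exact Subrelation.wf (fun h => Relation.TransGen.single h)
      (Finite.wellFounded_of_trans_of_irrefl _)
  have key : ∀ uv : V × V, uv ∈ W.N → ∃ p, IsValidWalk E lab uv.1 uv.2 p := by
    intro uv
    induction uv using WellFounded.induction hwf with
    | _ uv ih =>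
    intro hmem
    obtain ⟨u, v⟩ := uv
    have hpv := W.prod_valid u v hmem
    rcases hprod : W.prod (u, v) with w | ⟨x, y⟩ | _
    · rw [hprod] at hpv
      obtain ⟨h1, h2⟩ := hpv
      obtain ⟨p, hp1, hp2⟩ := ih (u, w) ⟨hmem, by rw [hprod]; left; rfl⟩ h1
      obtain ⟨q, hq1, hq2⟩ := ih (w, v) ⟨hmem, by rw [hprod]; right; rfl⟩ h2
      exact ⟨p ++ q, isWalk_append E hp1 hq1, by simpa using IsDyck.append hp2 hq2⟩
    · rw [hprod] at hpv
      obtain ⟨hE1, hE2, hN, hlab⟩ := hpv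
      obtain ⟨p, hp1, hp2⟩ := ih (x, y) ⟨hmem, by rw [hprod]⟩ hN
      refine ⟨(u, x) :: (p ++ [(y, v)]), ⟨hE1, rfl, isWalk_append E hp1 ⟨hE2, rfl, rfl⟩⟩, ?_⟩
      simp only [List.map_cons, List.map_append, List.map]
      rcases hlab with ⟨h1, h2⟩ | ⟨h1, h2⟩
      · rw [h1, h2]; exact IsDyck.br1 hp2
      · rw [h1, h2]; exact IsDyck.br2 hp2
    · rw [hprod] at hpv
      exact ⟨[], hpv, IsDyck.nil⟩
  exact key (s, t) W.axiom_mem
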